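/- arXiv:2310.12096 — 3 statements merged into one kernel-verified Lean document; each statement's English description precedes it below -/
import Mathlib

section
/- An edge e of a directed weighted graph is vital (i.e., removing e strictly decreases the capacity of the minimum (s,t)-cut) if and only if f(e) > 0 in every maximum (s,t)-flow f. -/
set_option linter.unusedSectionVars false

open Finset

variable {V : Type*} [Fintype V] [DecidableEq V]

/-- capacity of the cut given by the source-side vertex set `C`:
total capacity of edges with tail in `C` and head outside `C`. -/
noncomputable def cutCap (E : Finset (V × V)) (w : V × V → ℝ) (C : Finset V) : ℝ :=
  ∑ e ∈ E.filter (fun e => e.1 ∈ C ∧ e.2 ∉ C), w e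

/-- `C` is an (s,t)-cut. -/
def IsCut (s t : V) (C : Finset V) : Prop := s ∈ C ∧ t ∉ C

/-- edge `e` is a contributing (outgoing) edge of the cut `C`. -/
def Contributes (e : V × V) (C : Finset V) : Prop := e.1 ∈ C ∧ e.2 ∉ C

/-- `f` is a feasible (s,t)-flow on edge set `E` with capacities `w`. -/
structure IsFlow (E : Finset (V × V)) (w : V × V → ℝ) (s t : V) (f : V × V → ℝ) : Prop where
  nonneg : ∀ e ∈ E, 0 ≤ f e
  le_cap : ∀ e ∈ E, f e ≤ w e
  support : ∀ e, e ∉ E → f e = 0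
  conserve : ∀ v, v ≠ s → v ≠ t →
    ∑ e ∈ E.filter (fun e => e.1 = v), f e = ∑ e ∈ E.filter (fun e => e.2 = v), f e

/-- value of an (s,t)-flow: the net flow out of `s`. -/
noncomputable def flowValue (E : Finset (V × V)) (s : V) (f : V × V → ℝ) : ℝ :=
  ∑ e ∈ E.filter (fun e => e.1 = s), f e - ∑ e ∈ E.filter (fun e => e.2 = s), f e

/-- `f` is a maximum (s,t)-flow. -/
def IsMaxFlow (E : Finset (V × V)) (w : V × V → ℝ) (s t : V) (f : V × V → ℝ) : Prop :=
  IsFlow E w s t f ∧ ∀ g, IsFlow E w s t g → flowValue E s g ≤ flowValue E s f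

/-- capacity of a minimum (s,t)-cut. -/
noncomputable def minCutCap (E : Finset (V × V)) (w : V × V → ℝ) (s t : V) : ℝ :=
  sInf {x | ∃ C : Finset V, IsCut s t C ∧ cutCap E w C = x}

/-- `e` is a vital edge: deleting it strictly decreases the min (s,t)-cut capacity. -/
def Vital (E : Finset (V × V)) (w : V × V → ℝ) (s t : V) (e : V × V) : Prop :=
  e ∈ E ∧ minCutCap (E.erase e) w s t < minCutCap E w s t

/-- `C` is a mincut for the edge `e`: a least-capacity (s,t)-cut in which `e` contributes. -/
def IsMincutFor (E : Finset (V × V)) (w : V × V → ℝ) (s t : V) (e : V × V)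
    (C : Finset V) : Prop :=
  IsCut s t C ∧ Contributes e C ∧
    ∀ C', IsCut s t C' → Contributes e C' → cutCap E w C ≤ cutCap E w C'

/-- total flow on edges leaving the cut `C`. -/
noncomputable def flowOut (E : Finset (V × V)) (f : V × V → ℝ) (C : Finset V) : ℝ :=
  ∑ e ∈ E.filter (fun e => e.1 ∈ C ∧ e.2 ∉ C), f e

/-- total flow on edges entering the cut `C`. -/
noncomputable def flowIn (E : Finset (V × V)) (f : V × V → ℝ) (C : Finset V) : ℝ :=
  ∑ e ∈ E.filter (fun e => e.1 ∉ C ∧ e.2 ∈ C), f e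

/-!
By max-flow min-cut, a maximum flow of `G` vanishing on `e` is a flow of `G - e` of value
`mincut G`, which is impossible when `e` is vital. Conversely, a maximum flow of `G - e` is a flow
of `G` vanishing on `e`; its value is `mincut (G - e)`, so if deleting `e` does not lower the
minimum cut it is a maximum flow of `G`.

For max-flow min-cut, the vertices reachable from `s` in the residual graph of a maximum flow form
a cut that the flow saturates, with no flow coming back into it: if `t` were reachable, flow could
be augmented. Instead of extracting a simple augmenting path, arbitrarily small amounts are pushed
along a residual walk, one arc at a time.
-/

noncomputable def netOutflow (E : Finset (V × V)) (f : V × V → ℝ) (v : V) : ℝ :=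
  ∑ e ∈ E.filter (fun e => e.1 = v), f e - ∑ e ∈ E.filter (fun e => e.2 = v), f e

section

variable {E : Finset (V × V)} {w f g : V × V → ℝ} {s t x y v : V} {C : Finset V}

theorem flowValue_eq_netOutflow : flowValue E s f = netOutflow E f s := rfl

theorem netOutflow_add : netOutflow E (f + g) v = netOutflow E f v + netOutflow E g v := by
  simp only [netOutflow, Pi.add_apply, sum_add_distrib]
  ring

theorem netOutflow_single {a : V × V} (ha : a ∈ E) (c : ℝ) :
    netOutflow E (Pi.single a c) v = (if v = a.1 then c else 0) - (if v = a.2 then c else 0) := by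
  simp only [netOutflow, sum_pi_single', mem_filter, ha, true_and, eq_comm]

theorem sum_netOutflow (E : Finset (V × V)) (f : V × V → ℝ) (C : Finset V) :
    ∑ v ∈ C, netOutflow E f v = flowOut E f C - flowIn E f C := by
  simp only [netOutflow]
  rw [sum_sub_distrib, sum_fiberwise_eq_sum_filter, sum_fiberwise_eq_sum_filter, flowOut, flowIn]
  simp only [sum_filter, ← sum_sub_distrib]
  refine sum_congr rfl fun a _ => ?_
  by_cases h1 : a.1 ∈ C <;> by_cases h2 : a.2 ∈ C <;> simp [h1, h2]

theorem IsFlow.netOutflow_eq_zero (hf : IsFlow E w s t f) (hvs : v ≠ s) (hvt : v ≠ t) :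
    netOutflow E f v = 0 :=
  sub_eq_zero.2 (hf.conserve v hvs hvt)

theorem IsFlow.flowValue_eq_flowOut_sub_flowIn (hf : IsFlow E w s t f) (hC : IsCut s t C) :
    flowValue E s f = flowOut E f C - flowIn E f C := by
  have hzero : ∀ v ∈ C.erase s, netOutflow E f v = 0 := fun v hv =>
    hf.netOutflow_eq_zero (ne_of_mem_erase hv) (ne_of_mem_of_not_mem (mem_of_mem_erase hv) hC.2)
  rw [← sum_netOutflow, ← add_sum_erase C _ hC.1, sum_eq_zero hzero, add_zero,
    flowValue_eq_netOutflow]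

theorem IsFlow.flowValue_le_cutCap (hf : IsFlow E w s t f) (hC : IsCut s t C) :
    flowValue E s f ≤ cutCap E w C := by
  have hout : flowOut E f C ≤ cutCap E w C :=
    sum_le_sum fun a ha => hf.le_cap a (mem_filter.1 ha).1
  have hin : 0 ≤ flowIn E f C := sum_nonneg fun a ha => hf.nonneg a (mem_filter.1 ha).1
  rw [hf.flowValue_eq_flowOut_sub_flowIn hC]
  linarith

theorem minCutCap_le_cutCap (hC : IsCut s t C) : minCutCap E w s t ≤ cutCap E w C := by
  have hfinite : {x | ∃ C : Finset V, IsCut s t C ∧ cutCap E w C = x}.Finite :=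
    (Set.finite_range (cutCap E w)).subset fun _ ⟨C, _, hC⟩ => ⟨C, hC⟩
  exact csInf_le hfinite.bddBelow ⟨C, hC, rfl⟩

theorem le_minCutCap (hst : s ≠ t) {c : ℝ} (h : ∀ C, IsCut s t C → c ≤ cutCap E w C) :
    c ≤ minCutCap E w s t := by
  refine le_csInf ⟨_, univ.erase t, ⟨mem_erase.2 ⟨hst, mem_univ s⟩, notMem_erase t _⟩, rfl⟩ ?_
  rintro _ ⟨C, hC, rfl⟩
  exact h C hC

theorem IsFlow.flowValue_le_minCutCap (hst : s ≠ t) (hf : IsFlow E w s t f) :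
    flowValue E s f ≤ minCutCap E w s t :=
  le_minCutCap hst fun _ hC => hf.flowValue_le_cutCap hC

theorem IsFlow.isMaxFlow_of_flowValue_eq (hst : s ≠ t) (hf : IsFlow E w s t f)
    (h : flowValue E s f = minCutCap E w s t) : IsMaxFlow E w s t f :=
  ⟨hf, fun _ hg => h ▸ hg.flowValue_le_minCutCap hst⟩

def ResidualArc (E : Finset (V × V)) (w f : V × V → ℝ) (x y : V) : Prop :=
  ((x, y) ∈ E ∧ f (x, y) < w (x, y)) ∨ ((y, x) ∈ E ∧ 0 < f (y, x))

theorem flowOut_eq_cutCap (hf : IsFlow E w s t f)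
    (hC : ∀ x y, x ∈ C → ResidualArc E w f x y → y ∈ C) : flowOut E f C = cutCap E w C := by
  refine sum_congr rfl fun a ha => ?_
  obtain ⟨haE, h1, h2⟩ := mem_filter.1 ha
  by_contra hne
  exact h2 (hC a.1 a.2 h1 (.inl ⟨haE, (hf.le_cap a haE).lt_of_ne hne⟩))

theorem flowIn_eq_zero (hf : IsFlow E w s t f)
    (hC : ∀ x y, x ∈ C → ResidualArc E w f x y → y ∈ C) : flowIn E f C = 0 := by
  refine sum_eq_zero fun a ha => ?_
  obtain ⟨haE, h1, h2⟩ := mem_filter.1 ha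
  by_contra hne
  exact h1 (hC a.2 a.1 h2 (.inr ⟨haE, (hf.nonneg a haE).lt_of_ne' hne⟩))

/-- Arbitrarily small amounts `δ` of flow can be rerouted from `s` to `x` by arbitrarily small
perturbations `g` of `f`. Smallness of `g` keeps the residual capacities of `f` available, so the
rerouting extends along residual walks even when they pass an arc several times. -/
def IsAugmentableTo (E : Finset (V × V)) (w : V × V → ℝ) (s : V) (f : V × V → ℝ) (x : V) :
    Prop :=
  ∀ ε > 0, ∃ g : V × V → ℝ, ∃ δ > 0, δ ≤ ε ∧ (∀ a, |g a| ≤ ε) ∧ (∀ a ∉ E, g a = 0) ∧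
    (∀ a ∈ E, f a + g a ∈ Set.Icc 0 (w a)) ∧
    ∀ v, netOutflow E g v = (if v = s then δ else 0) - (if v = x then δ else 0)

theorem IsFlow.isAugmentableTo_self (hf : IsFlow E w s t f) : IsAugmentableTo E w s f s :=
  fun ε hε => ⟨0, ε, hε, le_rfl, fun _ => by simpa using hε.le, fun _ _ => rfl,
    fun a ha => by simpa using ⟨hf.nonneg a ha, hf.le_cap a ha⟩, fun v => by simp [netOutflow]⟩

theorem IsAugmentableTo.push {a : V × V} {σ r : ℝ} (hx : IsAugmentableTo E w s f x) (ha : a ∈ E)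
    (harc : (a = (x, y) ∧ σ = 1) ∨ (a = (y, x) ∧ σ = -1)) (hr : 0 < r)
    (hroom : ∀ u ∈ Set.Icc 0 (w a), |u - f a| ≤ r → ∀ δ ∈ Set.Ioc 0 r,
      u + σ * δ ∈ Set.Icc 0 (w a)) :
    IsAugmentableTo E w s f y := by
  intro ε hε
  obtain ⟨g, δ, hδ, hδε, hgε, hg0, hfg, hdiv⟩ := hx (min (ε / 2) r) (lt_min (half_pos hε) hr)
  have hσ : |σ| = 1 := by rcases harc with ⟨-, rfl⟩ | ⟨-, rfl⟩ <;> simp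
  have hδε' : δ ≤ ε / 2 := hδε.trans (min_le_left _ _)
  refine ⟨g + Pi.single a (σ * δ), δ, hδ, by linarith, fun b => ?_, fun b hb => ?_,
    fun b hb => ?_, fun v => ?_⟩
  · have hgb := (hgε b).trans (min_le_left _ _)
    rcases eq_or_ne b a with rfl | hba
    · have := abs_add_le (g b) (σ * δ)
      simp only [Pi.add_apply, Pi.single_eq_same, abs_mul, hσ, one_mul, abs_of_pos hδ] at this ⊢
      linarith
    · simpa [hba] using hgb.trans (half_le_self hε.le)
  · simp [hg0 b hb, ne_of_mem_of_not_mem ha hb |>.symm]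
  · rcases eq_or_ne b a with rfl | hba
    · simpa [add_assoc] using hroom _ (hfg b hb) (by simpa using (hgε b).trans (min_le_right _ _))
        δ ⟨hδ, hδε.trans (min_le_right _ _)⟩
    · simpa [hba] using hfg b hb
  · rw [netOutflow_add, hdiv, netOutflow_single ha]
    rcases harc with ⟨rfl, rfl⟩ | ⟨rfl, rfl⟩ <;> split_ifs <;> simp_all

theorem IsAugmentableTo.tail (hx : IsAugmentableTo E w s f x) (hxy : ResidualArc E w f x y) :
    IsAugmentableTo E w s f y := by
  rcases hxy with ⟨ha, hlt⟩ | ⟨ha, hpos⟩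
  · refine hx.push ha (.inl ⟨rfl, rfl⟩) (half_pos (sub_pos.2 hlt)) fun u hu hur δ hδ => ?_
    have := (abs_le.1 hur).2
    exact ⟨by linarith [hu.1, hδ.1], by linarith [hδ.2]⟩
  · refine hx.push ha (.inr ⟨rfl, rfl⟩) (half_pos hpos) fun u hu hur δ hδ => ?_
    have := (abs_le.1 hur).1
    exact ⟨by linarith [hδ.2], by linarith [hu.2, hδ.1]⟩

theorem IsFlow.isAugmentableTo_of_reflTransGen (hf : IsFlow E w s t f)
    (h : Relation.ReflTransGen (ResidualArc E w f) s x) : IsAugmentableTo E w s f x := by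
  induction h with
  | refl => exact hf.isAugmentableTo_self
  | tail _ hxy ih => exact ih.tail hxy

theorem IsMaxFlow.not_reflTransGen_residualArc (hst : s ≠ t) (hf : IsMaxFlow E w s t f) :
    ¬ Relation.ReflTransGen (ResidualArc E w f) s t := by
  intro h
  obtain ⟨g, δ, hδ, -, -, hg0, hfg, hdiv⟩ := hf.1.isAugmentableTo_of_reflTransGen h 1 one_pos
  have hflow : IsFlow E w s t (f + g) :=
    ⟨fun a ha => (hfg a ha).1, fun a ha => (hfg a ha).2,
      fun a ha => by simp [hf.1.support a ha, hg0 a ha], fun v hvs hvt => sub_eq_zero.1 <| by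
        rw [← netOutflow, netOutflow_add, hf.1.netOutflow_eq_zero hvs hvt, hdiv]; simp [hvs, hvt]⟩
  have hvalue : flowValue E s (f + g) = flowValue E s f + δ := by
    simp only [flowValue_eq_netOutflow, netOutflow_add, hdiv, hst]
    simp
  linarith [hf.2 _ hflow]

theorem IsMaxFlow.flowValue_eq_minCutCap (hst : s ≠ t) (hf : IsMaxFlow E w s t f) :
    flowValue E s f = minCutCap E w s t := by
  classical
  let C := univ.filter (Relation.ReflTransGen (ResidualArc E w f) s)
  have hC : IsCut s t C := ⟨by simp [C, Relation.ReflTransGen.refl],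
    by simpa [C] using hf.not_reflTransGen_residualArc hst⟩
  have hclosed : ∀ x y, x ∈ C → ResidualArc E w f x y → y ∈ C := by
    simpa [C] using fun x y hx hxy => hx.tail hxy
  refine le_antisymm (hf.1.flowValue_le_minCutCap hst) ?_
  calc minCutCap E w s t ≤ cutCap E w C := minCutCap_le_cutCap hC
    _ = flowValue E s f := by
      rw [hf.1.flowValue_eq_flowOut_sub_flowIn hC, flowOut_eq_cutCap hf.1 hclosed,
        flowIn_eq_zero hf.1 hclosed, sub_zero]

theorem continuous_netOutflow (E : Finset (V × V)) (v : V) :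
    Continuous fun f : V × V → ℝ => netOutflow E f v := by
  unfold netOutflow
  fun_prop

theorem isClosed_setOf_isFlow (E : Finset (V × V)) (w : V × V → ℝ) (s t : V) :
    IsClosed {f | IsFlow E w s t f} := by
  have hflows : {f | IsFlow E w s t f} = (⋂ a ∈ E, {f | f a ∈ Set.Icc 0 (w a)}) ∩
      (⋂ a ∉ E, {f | f a = 0}) ∩ ⋂ v ≠ s, ⋂ (_ : v ≠ t), {f | netOutflow E f v = 0} := by
    ext f
    simp only [Set.mem_ofPred_eq, Set.mem_inter_iff, Set.mem_iInter, Set.mem_Icc]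
    exact ⟨fun hf => ⟨⟨fun a ha => ⟨hf.nonneg a ha, hf.le_cap a ha⟩, hf.support⟩,
      fun v hvs hvt => hf.netOutflow_eq_zero hvs hvt⟩,
      fun ⟨⟨hcap, hsupp⟩, hcons⟩ => ⟨fun a ha => (hcap a ha).1, fun a ha => (hcap a ha).2, hsupp,
        fun v hvs hvt => sub_eq_zero.1 (hcons v hvs hvt)⟩⟩
  rw [hflows]
  refine ((isClosed_biInter fun a _ => ?_).inter (isClosed_biInter fun a _ => ?_)).inter
    (isClosed_biInter fun v _ => isClosed_iInter fun _ => ?_)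
  · exact isClosed_Icc.preimage (continuous_apply a)
  · exact isClosed_eq (continuous_apply a) continuous_const
  · exact isClosed_eq (continuous_netOutflow E v) continuous_const

theorem exists_isMaxFlow (s t : V) (hw : ∀ a ∈ E, 0 ≤ w a) : ∃ f, IsMaxFlow E w s t f := by
  have hzero : IsFlow E w s t 0 := ⟨fun _ _ => le_rfl, hw, fun _ _ => rfl, fun _ _ _ => by simp⟩
  have hbox : {f | IsFlow E w s t f} ⊆ Set.univ.pi fun a => Set.Icc 0 (max (w a) 0) := by
    intro f hf a _
    by_cases ha : a ∈ E
    · exact ⟨hf.nonneg a ha, (hf.le_cap a ha).trans (le_max_left _ _)⟩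
    · simp [hf.support a ha]
  have hcompact : IsCompact {f | IsFlow E w s t f} :=
    (isCompact_univ_pi fun _ => isCompact_Icc).of_isClosed_subset (isClosed_setOf_isFlow E w s t)
      hbox
  obtain ⟨f, hf, hmax⟩ :=
    hcompact.exists_isMaxOn ⟨0, hzero⟩ (continuous_netOutflow E s).continuousOn
  exact ⟨f, hf, fun g hg => hmax hg⟩

theorem sum_filter_erase_of_eq_zero {e : V × V} (he : g e = 0) (p : V × V → Prop)
    [DecidablePred p] : ∑ a ∈ (E.erase e).filter p, g a = ∑ a ∈ E.filter p, g a := by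
  rw [filter_erase, sum_erase _ he]

theorem flowValue_erase_of_eq_zero {e : V × V} (he : f e = 0) :
    flowValue (E.erase e) s f = flowValue E s f := by
  simp only [flowValue, sum_filter_erase_of_eq_zero he]

theorem IsFlow.erase {e : V × V} (hf : IsFlow E w s t f) (he : f e = 0) :
    IsFlow (E.erase e) w s t f where
  nonneg a ha := hf.nonneg a (mem_of_mem_erase ha)
  le_cap a ha := hf.le_cap a (mem_of_mem_erase ha)
  support a ha := by
    rcases eq_or_ne a e with rfl | hae
    · exact he
    · exact hf.support a fun h => ha (mem_erase.2 ⟨hae, h⟩)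
  conserve v hvs hvt := by
    simpa only [sum_filter_erase_of_eq_zero he] using hf.conserve v hvs hvt

theorem IsFlow.of_erase {e : V × V} (hf : IsFlow (E.erase e) w s t f) (hwe : 0 ≤ w e) :
    IsFlow E w s t f := by
  have he : f e = 0 := hf.support e (notMem_erase e E)
  refine ⟨fun a ha => ?_, fun a ha => ?_, fun a ha => hf.support a fun h => ha (mem_of_mem_erase h),
    fun v hvs hvt => ?_⟩
  · rcases eq_or_ne a e with rfl | hae
    · exact he.ge
    · exact hf.nonneg a (mem_erase.2 ⟨hae, ha⟩)
  · rcases eq_or_ne a e with rfl | hae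
    · exact he.trans_le hwe
    · exact hf.le_cap a (mem_erase.2 ⟨hae, ha⟩)
  · simpa only [sum_filter_erase_of_eq_zero he] using hf.conserve v hvs hvt

end

theorem vital_iff_pos_in_every_maxflow_general (E : Finset (V × V)) (w : V × V → ℝ) (s t : V)
    (hst : s ≠ t) (hpos : ∀ e ∈ E, 0 < w e) (e : V × V) :
    Vital E w s t e ↔ ∀ f, IsMaxFlow E w s t f → 0 < f e := by
  have hw : ∀ a ∈ E, 0 ≤ w a := fun a ha => (hpos a ha).le
  constructor
  · rintro ⟨he, hlt⟩ f hf
    refine (hf.1.nonneg e he).lt_of_ne' fun hfe => ?_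
    have := (hf.1.erase hfe).flowValue_le_minCutCap hst
    rw [flowValue_erase_of_eq_zero hfe, hf.flowValue_eq_minCutCap hst] at this
    exact this.not_gt hlt
  · intro hall
    have he : e ∈ E := by
      obtain ⟨f, hf⟩ := exists_isMaxFlow s t hw
      by_contra he
      exact (hall f hf).ne' (hf.1.support e he)
    obtain ⟨g, hg⟩ := exists_isMaxFlow (E := E.erase e) s t fun a ha => hw a (mem_of_mem_erase ha)
    have hge : g e = 0 := hg.1.support e (notMem_erase e E)
    have hgE : IsFlow E w s t g := hg.1.of_erase (hw e he)
    refine ⟨he, ?_⟩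
    rw [← hg.flowValue_eq_minCutCap hst, flowValue_erase_of_eq_zero hge]
    exact (hgE.flowValue_le_minCutCap hst).lt_of_ne fun heq =>
      (hall g (hgE.isMaxFlow_of_flowValue_eq hst heq)).ne' hge

theorem vital_iff_pos_in_every_maxflow (E : Finset (V × V)) (w : V × V → ℝ) (s t : V)
    (hst : s ≠ t) (hpos : ∀ e ∈ E, 0 < w e) (e : V × V) (he : e ∈ E) :
    Vital E w s t e ↔ ∀ f, IsMaxFlow E w s t f → 0 < f e :=
  vital_iff_pos_in_every_maxflow_general E w s t hst hpos e
end

section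
/- Let E' be a set of vital edges, and let e ∈ E' be an edge whose mincut has least capacity among mincuts of all edges in E'; let C be a mincut for e. Then every vital edge e' ∈ E' that contributes to C has C as a mincut for e' as well. -/
open Finset

variable {V : Type*} [Fintype V] [DecidableEq V]

section Mincut

variable {E : Finset (V × V)} {w : V × V → ℝ} {s t : V} {e : V × V} {C : Finset V}

theorem exists_isMincutFor (hC : IsCut s t C) (he : Contributes e C) :
    ∃ D, IsMincutFor E w s t e D := by
  classical
  obtain ⟨D, hD, hmin⟩ := Finset.exists_min_image
    ({D | IsCut s t D ∧ Contributes e D} : Finset (Finset V)) (cutCap E w)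
    ⟨C, by simp [hC, he]⟩
  simp only [Finset.mem_filter, Finset.mem_univ, true_and] at hD hmin
  exact ⟨D, hD.1, hD.2, fun D' hD' he' => hmin D' ⟨hD', he'⟩⟩

omit [Fintype V] in
theorem IsMincutFor.of_cutCap_le {D : Finset V} (hD : IsMincutFor E w s t e D)
    (hC : IsCut s t C) (he : Contributes e C) (hle : cutCap E w C ≤ cutCap E w D) :
    IsMincutFor E w s t e C :=
  ⟨hC, he, fun C' hC' he' => hle.trans (hD.2.2 C' hC' he')⟩

end Mincut

theorem least_mincut_covers_contributing_edges_general (E E' : Finset (V × V))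
    (w : V × V → ℝ) (s t : V)
    (e : V × V) (C : Finset V) (hC : IsMincutFor E w s t e C)
    (hleast : ∀ e' ∈ E', ∀ C', IsMincutFor E w s t e' C' →
      cutCap E w C ≤ cutCap E w C') :
    ∀ e' ∈ E', Contributes e' C → IsMincutFor E w s t e' C := by
  intro e' he' hcon
  obtain ⟨D, hD⟩ := exists_isMincutFor (E := E) (w := w) hC.1 hcon
  exact hD.of_cutCap_le hC.1 hcon (hleast e' he' D hD)

/-- if `e` has a mincut `C` of least capacity among mincuts of all edges in a set `E'`
of vital edges, then `C` is a mincut for every edge of `E'` contributing to `C`. -/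
theorem least_mincut_covers_contributing_edges (E E' : Finset (V × V))
    (w : V × V → ℝ) (s t : V) (hst : s ≠ t) (hpos : ∀ e ∈ E, 0 < w e)
    (hE' : E' ⊆ E) (hvit : ∀ e' ∈ E', Vital E w s t e')
    (e : V × V) (he : e ∈ E') (C : Finset V) (hC : IsMincutFor E w s t e C)
    (hleast : ∀ e' ∈ E', ∀ C', IsMincutFor E w s t e' C' →
      cutCap E w C ≤ cutCap E w C') :
    ∀ e' ∈ E', Contributes e' C → IsMincutFor E w s t e' C :=
  least_mincut_covers_contributing_edges_general E E' w s t e C hC hleast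
end

section
/- Any mincut for a vital edge partitions an arbitrary set 𝓔 of vital edges into three disjoint classes: edges contributing to the cut, edges with both endpoints inside the cut, and edges with both endpoints outside the cut; in particular, no vital edge enters the cut (tail outside, head inside). -/
open Finset

variable {V : Type*} [Fintype V] [DecidableEq V]

/-!
Suppose a vital edge `e'` enters a mincut `C` for the vital edge `e`, and let `λ` be the min-cut
capacity. Vitality bounds `cutCap C < λ + w e` and yields a cut `C'` cut by `e'` with
`cutCap C' < λ + w e'`. Uncrossing,
`cutCap C + cutCap C' = cutCap (C ∩ C') + cutCap (C ∪ C') + crossCap (C \ C') (C' \ C)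
  + crossCap (C' \ C) (C \ C')`, and `e'` runs from `C' \ C` to `C \ C'`. If `e` still contributes
to `C ∩ C'` or to `C ∪ C'`, that cut costs at least `cutCap C` and the other at least `λ`, so
`cutCap C' ≥ λ + w e'`. Otherwise `e` runs from `C \ C'` to `C' \ C`, and
`cutCap C + cutCap C' ≥ 2λ + w e + w e'`.
-/

section MinCut

variable {α : Type*} {E : Finset (α × α)} {w : α × α → ℝ} {s t : α}

lemma IsCut.ne {C : Finset α} (hC : IsCut s t C) : s ≠ t :=
  fun h => hC.2 (h ▸ hC.1)

variable [DecidableEq α]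

noncomputable def crossCap (E : Finset (α × α)) (w : α × α → ℝ) (A B : Finset α) : ℝ :=
  ∑ e ∈ E.filter (fun e => e.1 ∈ A ∧ e.2 ∈ B), w e

lemma crossCap_nonneg (hw : ∀ f ∈ E, 0 ≤ w f) (A B : Finset α) : 0 ≤ crossCap E w A B :=
  sum_nonneg fun f hf => hw f (mem_filter.mp hf).1

lemma le_crossCap (hw : ∀ f ∈ E, 0 ≤ w f) {A B : Finset α} {e : α × α} (he : e ∈ E)
    (hA : e.1 ∈ A) (hB : e.2 ∈ B) : w e ≤ crossCap E w A B :=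
  single_le_sum (fun f hf => hw f (mem_filter.mp hf).1) (mem_filter.mpr ⟨he, hA, hB⟩)

lemma cutCap_add_cutCap (E : Finset (α × α)) (w : α × α → ℝ) (C C' : Finset α) :
    cutCap E w C + cutCap E w C' =
      cutCap E w (C ∩ C') + cutCap E w (C ∪ C') +
        crossCap E w (C \ C') (C' \ C) + crossCap E w (C' \ C) (C \ C') := by
  simp only [cutCap, crossCap, sum_filter, ← sum_add_distrib]
  refine sum_congr rfl fun f _ => ?_
  by_cases h1 : f.1 ∈ C <;> by_cases h2 : f.2 ∈ C <;> by_cases h3 : f.1 ∈ C' <;>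
    by_cases h4 : f.2 ∈ C' <;> simp [h1, h2, h3, h4]

lemma cutCap_erase_of_contributes {e : α × α} (he : e ∈ E) {C : Finset α}
    (hC : Contributes e C) : cutCap E w C = cutCap (E.erase e) w C + w e := by
  rw [cutCap, cutCap, filter_erase, sum_erase_add _ _ (mem_filter.mpr ⟨he, hC⟩)]

lemma cutCap_erase_of_not_contributes (e : α × α) {C : Finset α} (hC : ¬ Contributes e C) :
    cutCap (E.erase e) w C = cutCap E w C := by
  rw [cutCap, cutCap, filter_erase, erase_eq_of_notMem]
  exact fun h => hC (mem_filter.mp h).2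

lemma IsCut.inter {C C' : Finset α} (hC : IsCut s t C) (hC' : IsCut s t C') :
    IsCut s t (C ∩ C') :=
  ⟨mem_inter.mpr ⟨hC.1, hC'.1⟩, fun h => hC.2 (mem_inter.mp h).1⟩

lemma IsCut.union {C C' : Finset α} (hC : IsCut s t C) (hC' : IsCut s t C') :
    IsCut s t (C ∪ C') :=
  ⟨mem_union_left _ hC.1, fun h => (mem_union.mp h).elim hC.2 hC'.2⟩

variable [Fintype α]

lemma finite_cutCaps (E : Finset (α × α)) (w : α × α → ℝ) (s t : α) :
    {x | ∃ C : Finset α, IsCut s t C ∧ cutCap E w C = x}.Finite :=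
  (Set.finite_range (cutCap E w)).subset fun _ ⟨C, _, hC⟩ => ⟨C, hC⟩

lemma minCutCap_le {C : Finset α} (hC : IsCut s t C) : minCutCap E w s t ≤ cutCap E w C :=
  csInf_le (finite_cutCaps E w s t).bddBelow ⟨C, hC, rfl⟩

lemma exists_cutCap_eq_minCutCap (E : Finset (α × α)) (w : α × α → ℝ) (hst : s ≠ t) :
    ∃ C : Finset α, IsCut s t C ∧ cutCap E w C = minCutCap E w s t := by
  have hne : {x | ∃ C : Finset α, IsCut s t C ∧ cutCap E w C = x}.Nonempty :=
    ⟨_, univ.erase t, ⟨mem_erase.mpr ⟨hst, mem_univ s⟩, notMem_erase t univ⟩, rfl⟩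
  exact hne.csInf_mem (finite_cutCaps E w s t)

/-- A minimum cut of `E.erase e` must cut `e`, since otherwise it would be a cheaper cut of `E`. -/
lemma Vital.exists_cutCap_lt {e : α × α} (hvit : Vital E w s t e) (hst : s ≠ t) :
    ∃ C : Finset α, IsCut s t C ∧ Contributes e C ∧
      cutCap E w C < minCutCap E w s t + w e := by
  obtain ⟨he, hlt⟩ := hvit
  obtain ⟨C, hC, hcap⟩ := exists_cutCap_eq_minCutCap (E.erase e) w hst
  by_cases hcontr : Contributes e C
  · refine ⟨C, hC, hcontr, ?_⟩
    rw [cutCap_erase_of_contributes he hcontr, hcap]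
    linarith
  · have := minCutCap_le (E := E) (w := w) hC
    rw [← cutCap_erase_of_not_contributes e hcontr, hcap] at this
    linarith

lemma IsMincutFor.cutCap_lt {e : α × α} {C : Finset α} (hC : IsMincutFor E w s t e C)
    (hvit : Vital E w s t e) : cutCap E w C < minCutCap E w s t + w e := by
  obtain ⟨D, hD, hDe, hDcap⟩ := hvit.exists_cutCap_lt hC.1.ne
  exact (hC.2.2 D hD hDe).trans_lt hDcap

lemma IsMincutFor.not_enters (hw : ∀ f ∈ E, 0 ≤ w f) {e e' : α × α} {C : Finset α}
    (hC : IsMincutFor E w s t e C) (hvit : Vital E w s t e) (hvit' : Vital E w s t e') :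
    ¬ (e'.1 ∉ C ∧ e'.2 ∈ C) := by
  rintro ⟨hu, hv⟩
  have hCcap := hC.cutCap_lt hvit
  obtain ⟨hCcut, ⟨ha, hb⟩, hCmin⟩ := hC
  obtain ⟨C', hC'cut, ⟨hu', hv'⟩, hC'cap⟩ := hvit'.exists_cutCap_lt hCcut.ne
  have huncross := cutCap_add_cutCap E w C C'
  have he' : w e' ≤ crossCap E w (C' \ C) (C \ C') :=
    le_crossCap hw hvit'.1 (mem_sdiff.mpr ⟨hu', hu⟩) (mem_sdiff.mpr ⟨hv, hv'⟩)
  have hinter := minCutCap_le (E := E) (w := w) (hCcut.inter hC'cut)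
  have hunion := minCutCap_le (E := E) (w := w) (hCcut.union hC'cut)
  have hcross := crossCap_nonneg hw (C \ C') (C' \ C)
  by_cases h1 : e.1 ∈ C'
  · have := hCmin _ (hCcut.inter hC'cut) ⟨mem_inter.mpr ⟨ha, h1⟩, fun h => hb (mem_inter.mp h).1⟩
    linarith
  by_cases h2 : e.2 ∈ C'
  · have := le_crossCap hw hvit.1 (mem_sdiff.mpr ⟨ha, h1⟩) (mem_sdiff.mpr ⟨h2, hb⟩)
    linarith
  · have := hCmin _ (hCcut.union hC'cut)
      ⟨mem_union_left _ ha, fun h => (mem_union.mp h).elim hb h2⟩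
    linarith

end MinCut

theorem mincut_partitions_vital_edges_general (E 𝓔 : Finset (V × V)) (w : V × V → ℝ)
    (s t : V) (hpos : ∀ e ∈ E, 0 < w e)
    (hvit𝓔 : ∀ e' ∈ 𝓔, Vital E w s t e')
    (e : V × V) (hvit : Vital E w s t e) (C : Finset V)
    (hC : IsMincutFor E w s t e C) :
    ∀ e' ∈ 𝓔,
      ((e'.1 ∈ C ∧ e'.2 ∉ C) ∨ (e'.1 ∈ C ∧ e'.2 ∈ C) ∨ (e'.1 ∉ C ∧ e'.2 ∉ C)) ∧
      ¬ (e'.1 ∉ C ∧ e'.2 ∈ C) := by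
  intro e' he'
  have hno := hC.not_enters (fun f hf => (hpos f hf).le) hvit (hvit𝓔 e' he')
  exact ⟨by tauto, hno⟩

/-- a mincut for a vital edge partitions any set of vital edges into three classes:
contributing edges, edges inside, and edges outside; in particular no vital edge
enters the cut. -/
theorem mincut_partitions_vital_edges (E 𝓔 : Finset (V × V)) (w : V × V → ℝ)
    (s t : V) (hst : s ≠ t) (hpos : ∀ e ∈ E, 0 < w e)
    (h𝓔 : 𝓔 ⊆ E) (hvit𝓔 : ∀ e' ∈ 𝓔, Vital E w s t e')
    (e : V × V) (hvit : Vital E w s t e) (C : Finset V)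
    (hC : IsMincutFor E w s t e C) :
    ∀ e' ∈ 𝓔,
      ((e'.1 ∈ C ∧ e'.2 ∉ C) ∨ (e'.1 ∈ C ∧ e'.2 ∈ C) ∨ (e'.1 ∉ C ∧ e'.2 ∉ C)) ∧
      ¬ (e'.1 ∉ C ∧ e'.2 ∈ C) :=
  mincut_partitions_vital_edges_general E 𝓔 w s t hpos hvit𝓔 e hvit C hC
end
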